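/- arXiv:2006.14172 — 2 statements merged into one kernel-verified Lean document; each statement's English description precedes it below -/
import Mathlib

section
/- Let α, c ∈ ℝ with c² ≠ 1 and let V : ℝ → ℝ be continuously differentiable. At every point (q,p) ∈ ℝ² × ℝ² with ⟨p, q⟩ ≠ 0, the full gradients of the Hamiltonian ℋ and of the invariant I_rot(q,p) = ⟨Jp,q⟩, namely ∇ℋ(q,p) = (∇_q ℋ(q,p), ∇_p ℋ(q,p)) ∈ ℝ² × ℝ² and ∇I_rot(q,p) = (Jp, −Jq) ∈ ℝ² × ℝ², are linearly independent over ℝ. In particular ℋ and I_rot are functionally independent on the open set {(q,p) : ⟨p,q⟩ ≠ 0}. -/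
noncomputable section

open RealInnerProductSpace

/-- The Euclidean plane. -/
abbrev E2 : Type := EuclideanSpace ℝ (Fin 2)

/-- The linear map `J(x₁,x₂) = (x₂, −x₁)`. -/
def Jmap (v : E2) : E2 := WithLp.toLp 2 ![v 1, -v 0]

/-- The rotation `R(t) = exp(tαJ)`. -/
def Rot (α t : ℝ) (v : E2) : E2 :=
  WithLp.toLp 2 ![Real.cos (α * t) * v 0 + Real.sin (α * t) * v 1,
    -Real.sin (α * t) * v 0 + Real.cos (α * t) * v 1]

/-- The symmetrised first-order Lagrangian `L⁰`. -/
def L0 (α c : ℝ) (V : ℝ → ℝ) (a v : E2) : ℝ :=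
  (1 / 2) * (α ^ 2 * ⟪a, a⟫ - 2 * α * c * ⟪Jmap a, v⟫ + (c ^ 2 - 1) * ⟪v, v⟫ + V ⟪a, a⟫)

/-- The Hamiltonian `ℋ` obtained as the Legendre transform of `L⁰`. -/
def Ham (α c : ℝ) (V : ℝ → ℝ) (q p : E2) : ℝ :=
  (1 / (2 * (c ^ 2 - 1))) *
    (‖p‖ ^ 2 + 2 * c * α * ⟪p, Jmap q⟫ + α ^ 2 * ‖q‖ ^ 2 - (c ^ 2 - 1) * V (‖q‖ ^ 2))

lemma inner_Jmap_self (v : E2) : ⟪Jmap v, v⟫ = 0 := by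
  simp only [Jmap, PiLp.inner_apply, Fin.sum_univ_two]
  simp only [Matrix.cons_val_zero, Matrix.cons_val_one, RCLike.inner_apply, conj_trivial]
  ring

lemma Jmap_eq_zero_iff {v : E2} : Jmap v = 0 ↔ v = 0 := by
  constructor
  · intro hv
    have h0 : Jmap v 0 = 0 := by rw [hv]; rfl
    have h1 : Jmap v 1 = 0 := by rw [hv]; rfl
    simp only [Jmap, PiLp.toLp_apply, Matrix.cons_val_zero, Matrix.cons_val_one,
      neg_eq_zero] at h0 h1
    ext i
    fin_cases i <;> assumption
  · rintro rfl
    ext i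
    fin_cases i <;> simp [Jmap]

lemma linearIndependent_pair_of_inner {F : Type*} [NormedAddCommGroup F] [InnerProductSpace ℝ F]
    {x y w : F} (hx : ⟪x, w⟫ ≠ 0) (hy : ⟪y, w⟫ = 0) (hy₀ : y ≠ 0) :
    LinearIndependent ℝ ![x, y] := by
  rw [LinearIndependent.pair_iff]
  intro s t hst
  have hs : s = 0 := by
    have := congrArg (⟪·, w⟫) hst
    simp only [inner_add_left, real_inner_smul_left, hy, mul_zero, add_zero, inner_zero_left] at this
    exact (mul_eq_zero.mp this).resolve_right hx
  subst hs
  rw [zero_smul, zero_add] at hst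
  exact ⟨rfl, (smul_eq_zero.mp hst).resolve_right hy₀⟩

lemma LinearIndependent.pair_prod_of_snd {R M N : Type*} [Ring R] [AddCommGroup M] [Module R M]
    [AddCommGroup N] [Module R N] {a b : M} {x y : N} (h : LinearIndependent R ![x, y]) :
    LinearIndependent R ![(a, x), (b, y)] := by
  rw [LinearIndependent.pair_iff] at h ⊢
  intro s t hst
  exact h s t (congrArg Prod.snd hst)

theorem statement8_general (α c : ℝ) (hc : c ^ 2 ≠ 1) (V : ℝ → ℝ)
    (q p : E2) (h : ⟪p, q⟫ ≠ 0) :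
    LinearIndependent ℝ
      ![(((c ^ 2 - 1)⁻¹ • ((α ^ 2) • q - (c * α) • Jmap p) - deriv V (‖q‖ ^ 2) • q,
           (c ^ 2 - 1)⁻¹ • (p + (c * α) • Jmap q)) : E2 × E2),
        ((Jmap p, -(Jmap q)) : E2 × E2)] := by
  have hq : q ≠ 0 := by rintro rfl; exact h (inner_zero_right p)
  -- already the `p`-components are independent, as pairing with `q` shows
  refine (linearIndependent_pair_of_inner (w := q) ?_ ?_ ?_).pair_prod_of_snd
  · simpa [inner_add_left, real_inner_smul_left, inner_Jmap_self] using ⟨sub_ne_zero.mpr hc, h⟩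
  · simp [inner_Jmap_self]
  · simpa [Jmap_eq_zero_iff] using hq

/-- at every point `(q,p)` with `⟨p,q⟩ ≠ 0`, the gradients
`∇ℋ(q,p) = (∇_qℋ, ∇_pℋ)` and `∇I_rot(q,p) = (Jp, −Jq)` are linearly independent. -/
theorem statement8 (α c : ℝ) (hc : c ^ 2 ≠ 1) (V : ℝ → ℝ) (hV : ContDiff ℝ 1 V)
    (q p : E2) (h : ⟪p, q⟫ ≠ 0) :
    LinearIndependent ℝ
      ![(((c ^ 2 - 1)⁻¹ • ((α ^ 2) • q - (c * α) • Jmap p) - deriv V (‖q‖ ^ 2) • q,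
           (c ^ 2 - 1)⁻¹ • (p + (c * α) • Jmap q)) : E2 × E2),
        ((Jmap p, -(Jmap q)) : E2 × E2)] :=
  statement8_general α c hc V q p h
end
end

section
/- Let α, c ∈ ℝ, Δt, Δx > 0, let V : ℝ → ℝ be continuously differentiable, and set W(a) = ½V(‖a‖²). Define the discrete Lagrangian L_Δ(a,b) = −(c²/(2Δx²))·‖R(−Δt/2)·b − R(Δt/2)·a‖² + ‖b − a‖²/(2Δx²) − W(a) for a, b ∈ ℝ². Then a map φ : ℝ → ℝ² satisfies the discrete Euler–Lagrange equations D₁L_Δ(φ(ξ), φ(ξ+Δx)) + D₂L_Δ(φ(ξ−Δx), φ(ξ)) = 0 for all ξ ∈ ℝ (where D₁, D₂ denote the gradients of L_Δ with respect to its first and second arguments) if and only if φ satisfies the functional equation (c²/Δx²)(R(−Δt)·φ(ξ+Δx) − 2φ(ξ) + R(Δt)·φ(ξ−Δx)) − (1/Δx²)(φ(ξ+Δx) − 2φ(ξ) + φ(ξ−Δx)) − V'(‖φ(ξ)‖²)·φ(ξ) = 0 for all ξ ∈ ℝ. -/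
/-!
Conjugating by the isometry `R(Δt/2)` turns the coupling term of `L_Δ(a, b)` into
`‖a - R(-Δt) b‖² = ‖b - R(Δt) a‖²`, so each partial gradient is an explicit affine expression
plus, in the first argument, the potential term `V'(‖a‖²) a`. Summing the two gradients along
`φ` gives the stencil term by term.
-/

noncomputable section

open RealInnerProductSpace

/-- The discrete Lagrangian for the resonant case `Δx = cΔt`. -/
def LΔc (α c Δt Δx : ℝ) (V : ℝ → ℝ) (a b : E2) : ℝ :=
  -(c ^ 2 / (2 * Δx ^ 2)) * ‖Rot α (-(Δt / 2)) b - Rot α (Δt / 2) a‖ ^ 2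
    + ‖b - a‖ ^ 2 / (2 * Δx ^ 2) - (1 / 2) * V (‖a‖ ^ 2)

section Gradient

variable {F : Type*} [NormedAddCommGroup F] [InnerProductSpace ℝ F] [CompleteSpace F]
  {f g : F → ℝ} {f' g' x : F}

theorem HasGradientAt.add (hf : HasGradientAt f f' x) (hg : HasGradientAt g g' x) :
    HasGradientAt (fun y => f y + g y) (f' + g') x := by
  rw [hasGradientAt_iff_hasFDerivAt] at *
  rw [map_add]
  exact hf.add hg

theorem HasGradientAt.sub (hf : HasGradientAt f f' x) (hg : HasGradientAt g g' x) :
    HasGradientAt (fun y => f y - g y) (f' - g') x := by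
  rw [hasGradientAt_iff_hasFDerivAt] at *
  rw [map_sub]
  exact hf.sub hg

theorem HasGradientAt.const_mul (k : ℝ) (hf : HasGradientAt f f' x) :
    HasGradientAt (fun y => k * f y) (k • f') x := by
  rw [hasGradientAt_iff_hasFDerivAt] at *
  rw [map_smul]
  exact hf.const_mul k

theorem HasDerivAt.comp_hasGradientAt {h : ℝ → ℝ} {h' : ℝ} (hh : HasDerivAt h h' (f x))
    (hf : HasGradientAt f f' x) : HasGradientAt (fun y => h (f y)) (h' • f') x := by
  rw [hasGradientAt_iff_hasFDerivAt] at *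
  rw [map_smul]
  exact hh.comp_hasFDerivAt x hf

theorem hasGradientAt_norm_sq_sub (u x : F) :
    HasGradientAt (fun y => ‖y - u‖ ^ 2) ((2 : ℝ) • (x - u)) x := by
  rw [hasGradientAt_iff_hasFDerivAt]
  refine ((hasFDerivAt_id x).sub_const u).norm_sq.congr_fderiv ?_
  ext y
  simp

theorem DifferentiableAt.hasGradientAt_comp_norm_sq {V : ℝ → ℝ}
    (hV : DifferentiableAt ℝ V (‖x‖ ^ 2)) :
    HasGradientAt (fun y => V (‖y‖ ^ 2)) ((2 * deriv V (‖x‖ ^ 2)) • x) x := by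
  have hnorm : HasGradientAt (fun y : F => ‖y‖ ^ 2) ((2 : ℝ) • x) x := by
    simpa using hasGradientAt_norm_sq_sub (0 : F) x
  simpa only [smul_smul, mul_comm] using
    HasDerivAt.comp_hasGradientAt (f := fun y : F => ‖y‖ ^ 2) hV.hasDerivAt hnorm

end Gradient

section Rotation

theorem Rot_sub (α t : ℝ) (v w : E2) : Rot α t (v - w) = Rot α t v - Rot α t w := by
  ext i
  fin_cases i <;> simp [Rot] <;> ring

theorem Rot_Rot (α s t : ℝ) (v : E2) : Rot α s (Rot α t v) = Rot α (s + t) v := by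
  ext i
  fin_cases i <;> simp [Rot, mul_add, Real.cos_add, Real.sin_add] <;> ring

theorem Rot_zero (α : ℝ) (v : E2) : Rot α 0 v = v := by
  ext i
  fin_cases i <;> simp [Rot]

theorem norm_Rot (α t : ℝ) (v : E2) : ‖Rot α t v‖ = ‖v‖ := by
  rw [EuclideanSpace.norm_eq, EuclideanSpace.norm_eq]
  congr 1
  simp only [Rot, Real.norm_eq_abs, sq_abs, Fin.sum_univ_two, Matrix.cons_val_zero,
    Matrix.cons_val_one, Matrix.cons_val_fin_one]
  nlinarith [Real.sin_sq_add_cos_sq (α * t)]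

theorem norm_Rot_sub_Rot (α s t : ℝ) (a b : E2) :
    ‖Rot α s b - Rot α t a‖ = ‖Rot α (s - t) b - a‖ := by
  rw [← norm_Rot α (-t), Rot_sub, Rot_Rot, Rot_Rot, neg_add_eq_sub, neg_add_cancel, Rot_zero]

end Rotation

section DiscreteLagrangian

variable (α c Δt Δx : ℝ) (V : ℝ → ℝ)

theorem LΔc_eq_left (a b : E2) :
    LΔc α c Δt Δx V a b = -(c ^ 2 / (2 * Δx ^ 2)) * ‖a - Rot α (-Δt) b‖ ^ 2
      + (2 * Δx ^ 2)⁻¹ * ‖a - b‖ ^ 2 - (1 / 2) * V (‖a‖ ^ 2) := by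
  rw [LΔc, norm_Rot_sub_Rot, norm_sub_rev, norm_sub_rev b, div_eq_inv_mul]
  ring_nf

theorem LΔc_eq_right (a b : E2) :
    LΔc α c Δt Δx V a b = -(c ^ 2 / (2 * Δx ^ 2)) * ‖b - Rot α Δt a‖ ^ 2
      + (2 * Δx ^ 2)⁻¹ * ‖b - a‖ ^ 2 - (1 / 2) * V (‖a‖ ^ 2) := by
  rw [LΔc, norm_sub_rev, norm_Rot_sub_Rot, norm_sub_rev, div_eq_inv_mul]
  ring_nf

theorem hasGradientAt_LΔc_left (b x : E2) (hV : DifferentiableAt ℝ V (‖x‖ ^ 2)) :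
    HasGradientAt (fun a => LΔc α c Δt Δx V a b)
      (-(c ^ 2 / Δx ^ 2) • (x - Rot α (-Δt) b) + (Δx ^ 2)⁻¹ • (x - b)
        - deriv V (‖x‖ ^ 2) • x) x := by
  simp_rw [LΔc_eq_left]
  convert (((hasGradientAt_norm_sq_sub _ x).const_mul _).add
    ((hasGradientAt_norm_sq_sub b x).const_mul _)).sub
    (hV.hasGradientAt_comp_norm_sq.const_mul (1 / 2)) using 1
  module

theorem hasGradientAt_LΔc_right (a x : E2) :
    HasGradientAt (fun b => LΔc α c Δt Δx V a b)
      (-(c ^ 2 / Δx ^ 2) • (x - Rot α Δt a) + (Δx ^ 2)⁻¹ • (x - a)) x := by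
  simp_rw [LΔc_eq_right]
  convert (((hasGradientAt_norm_sq_sub _ x).const_mul _).add
    ((hasGradientAt_norm_sq_sub a x).const_mul _)).sub (hasGradientAt_const x _) using 1
  module

end DiscreteLagrangian

theorem statement12_general (α c Δt Δx : ℝ)
    (V : ℝ → ℝ) (hV : ContDiff ℝ 1 V) (φ : ℝ → E2) :
    (∀ ξ : ℝ,
        gradient (fun a => LΔc α c Δt Δx V a (φ (ξ + Δx))) (φ ξ)
          + gradient (fun b => LΔc α c Δt Δx V (φ (ξ - Δx)) b) (φ ξ) = 0)
      ↔ (∀ ξ : ℝ,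
          (c ^ 2 / Δx ^ 2) • (Rot α (-Δt) (φ (ξ + Δx)) - (2 : ℝ) • φ ξ
              + Rot α Δt (φ (ξ - Δx)))
            - (Δx ^ 2)⁻¹ • (φ (ξ + Δx) - (2 : ℝ) • φ ξ + φ (ξ - Δx))
            - deriv V (‖φ ξ‖ ^ 2) • φ ξ = 0) := by
  refine forall_congr' fun ξ => ?_
  rw [(hasGradientAt_LΔc_left α c Δt Δx V _ _ (hV.differentiable one_ne_zero _)).gradient,
    (hasGradientAt_LΔc_right α c Δt Δx V _ _).gradient]
  apply iff_of_eq
  congr 1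
  module

/-- `φ` satisfies the discrete Euler–Lagrange equations
`D₁L_Δ(φ(ξ), φ(ξ+Δx)) + D₂L_Δ(φ(ξ−Δx), φ(ξ)) = 0` iff `φ` satisfies the resonant
(`Δx = cΔt`) reduced functional equation of the five-point stencil. -/
theorem statement12 (α c Δt Δx : ℝ) (hΔt : 0 < Δt) (hΔx : 0 < Δx)
    (V : ℝ → ℝ) (hV : ContDiff ℝ 1 V) (φ : ℝ → E2) :
    (∀ ξ : ℝ,
        gradient (fun a => LΔc α c Δt Δx V a (φ (ξ + Δx))) (φ ξ)
          + gradient (fun b => LΔc α c Δt Δx V (φ (ξ - Δx)) b) (φ ξ) = 0)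
      ↔ (∀ ξ : ℝ,
          (c ^ 2 / Δx ^ 2) • (Rot α (-Δt) (φ (ξ + Δx)) - (2 : ℝ) • φ ξ
              + Rot α Δt (φ (ξ - Δx)))
            - (Δx ^ 2)⁻¹ • (φ (ξ + Δx) - (2 : ℝ) • φ ξ + φ (ξ - Δx))
            - deriv V (‖φ ξ‖ ^ 2) • φ ξ = 0) :=
  statement12_general α c Δt Δx V hV φ
end
end
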